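/- arXiv:2605.12600 — 2 statements merged into one kernel-verified Lean document; each statement's English description precedes it below -/
import Mathlib

section
/- Let L ≥ 1, let 𝒞 = (C₁,…,C_K) be an interval partition of {0,…,L−1} with blocks C_j = {a_j,…,a_j+w_j−1}, and let u ≤ v be rows in {0,…,L−1}. Consider the subgrid S = {u,…,v} × C_j. Then the boustrophedon ordering m_𝒞 restricts to a Hamiltonian path through S: (i) the image m_𝒞(S) is the set of consecutive integers {L·a_j + w_j·u, …, L·a_j + w_j·(v+1) − 1}; and (ii) whenever p, q ∈ S satisfy m_𝒞(q) = m_𝒞(p) + 1, the points p and q are nearest neighbors in the grid, i.e. |p₁−q₁| + |p₂−q₂| = 1. -/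
/-!
Inside the block of width `w`, the point in row `r` and column offset `d < w` has rank
`B + w * r + ρ_r(d)`, and `ρ_r` is an involution of `{0, …, w - 1}`. Hence the row of a rank
is its quotient by `w` and its column is recovered from the remainder, which gives (i).
Consecutive ranks either stay in one row, where `ρ_r` moves by one column, or pass from
remainder `w - 1` in row `r` to remainder `0` in row `r + 1`; since `ρ_r` and `ρ_{r+1}` run in
opposite directions these are the same column, which gives (ii).
-/

/-- `ρ^{(w)}_r(c) = c` for even `r` and `w−1−c` for odd `r`. -/
def rhoW (w r c : ℕ) : ℕ := if r % 2 = 0 then c else w - 1 - c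

lemma rhoW_lt {w r c : ℕ} (hc : c < w) : rhoW w r c < w := by
  unfold rhoW; split <;> omega

lemma rhoW_rhoW {w r c : ℕ} (hc : c < w) : rhoW w r (rhoW w r c) = c := by
  unfold rhoW; split <;> omega

def snake (w : ℕ) (p : ℕ × ℕ) : ℕ := w * p.1 + rhoW w p.1 p.2

lemma snake_div {w : ℕ} {p : ℕ × ℕ} (hp : p.2 < w) : snake w p / w = p.1 := by
  have hw : 0 < w := by omega
  rw [snake, Nat.mul_add_div hw, Nat.div_eq_of_lt (rhoW_lt hp), add_zero]

lemma snake_div_mod {w : ℕ} (n : ℕ) : snake w (n / w, rhoW w (n / w) (n % w)) = n := by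
  rcases Nat.eq_zero_or_pos w with rfl | hw
  · simp [snake, rhoW]
  · rw [snake, rhoW_rhoW (Nat.mod_lt n hw), Nat.div_add_mod]

lemma mem_Icc_iff_div {w u v n : ℕ} (hw : 0 < w) :
    n ∈ Set.Icc (w * u) (w * (v + 1) - 1) ↔ u ≤ n / w ∧ n / w ≤ v := by
  rw [Nat.le_div_iff_mul_le hw, ← Nat.lt_add_one_iff (m := n / w), Nat.div_lt_iff_lt_mul hw,
    mul_comm u, mul_comm (v + 1)]
  simp only [Set.mem_Icc]
  have : 0 < w * (v + 1) := by positivity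
  omega

theorem snake_image {w : ℕ} (hw : 0 < w) (u v : ℕ) :
    snake w '' {p | u ≤ p.1 ∧ p.1 ≤ v ∧ p.2 < w} = Set.Icc (w * u) (w * (v + 1) - 1) := by
  ext n
  rw [mem_Icc_iff_div hw]
  constructor
  · rintro ⟨p, ⟨hu, hv, hp⟩, rfl⟩
    rw [snake_div hp]
    exact ⟨hu, hv⟩
  · rintro ⟨hu, hv⟩
    exact ⟨_, ⟨hu, hv, rhoW_lt (Nat.mod_lt n hw)⟩, snake_div_mod n⟩

theorem adjacent_of_snake_succ {w : ℕ} {p q : ℕ × ℕ} (hp : p.2 < w) (hq : q.2 < w)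
    (h : snake w q = snake w p + 1) :
    |(p.1 : ℤ) - q.1| + |(p.2 : ℤ) - q.2| = 1 := by
  suffices (q.1 = p.1 ∧ (q.2 = p.2 + 1 ∨ p.2 = q.2 + 1)) ∨ (q.1 = p.1 + 1 ∧ q.2 = p.2) by
    grind
  have hrow : q.1 = p.1 ∨ q.1 = p.1 + 1 := by
    rw [← snake_div hp, ← snake_div hq, h, Nat.succ_div]
    split <;> simp
  obtain ⟨r, c⟩ := p
  obtain ⟨r', c'⟩ := q
  simp only [snake] at h hp hq hrow ⊢
  rcases hrow with rfl | rfl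
  · unfold rhoW at h; split_ifs at h <;> omega
  · rw [mul_add, mul_one] at h
    unfold rhoW at h; split_ifs at h <;> omega

section Block

variable {mC : ℕ × ℕ → ℕ} {A B w : ℕ}

theorem image_block_eq_Icc
    (hm : ∀ r c, A ≤ c → c < A + w → mC (r, c) = B + snake w (r, c - A))
    (hw : 0 < w) (u v : ℕ) :
    mC '' {p | u ≤ p.1 ∧ p.1 ≤ v ∧ A ≤ p.2 ∧ p.2 < A + w} =
      Set.Icc (B + w * u) (B + w * (v + 1) - 1) := by
  have hsnake := snake_image hw u v
  have hlen : 0 < w * (v + 1) := by positivity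
  ext n
  simp only [Set.mem_Icc]
  constructor
  · rintro ⟨⟨r, c⟩, ⟨hu, hv, hc, hc'⟩, rfl⟩
    have := hsnake.subset ⟨(r, c - A), ⟨hu, hv, by omega⟩, rfl⟩
    rw [hm r c hc hc']
    simp only [Set.mem_Icc] at this
    omega
  · intro hn
    obtain ⟨⟨r, d⟩, ⟨hu, hv, hd⟩, hrd⟩ := hsnake.superset
      (show n - B ∈ Set.Icc _ _ by simp only [Set.mem_Icc]; omega)
    refine ⟨(r, A + d), ⟨hu, hv, by omega, by omega⟩, ?_⟩
    rw [hm r _ (by omega) (by omega), Nat.add_sub_cancel_left, hrd]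
    omega

theorem adjacent_of_block_succ
    (hm : ∀ r c, A ≤ c → c < A + w → mC (r, c) = B + snake w (r, c - A))
    {p q : ℕ × ℕ} (hp : A ≤ p.2 ∧ p.2 < A + w) (hq : A ≤ q.2 ∧ q.2 < A + w)
    (h : mC q = mC p + 1) :
    |(p.1 : ℤ) - q.1| + |(p.2 : ℤ) - q.2| = 1 := by
  obtain ⟨r, c⟩ := p
  obtain ⟨r', c'⟩ := q
  rw [hm r c hp.1 hp.2, hm r' c' hq.1 hq.2] at h
  have := adjacent_of_snake_succ (w := w) (p := (r, c - A)) (q := (r', c' - A))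
    (by omega) (by omega) (by omega)
  simpa [Nat.cast_sub hp.1, Nat.cast_sub hq.1] using this

end Block

theorem stmt9_general (L K : ℕ)
    (a w : ℕ → ℕ)
    (hw : ∀ j < K, 1 ≤ w j) (hstep : ∀ j < K, a (j + 1) = a j + w j)
    (mC : ℕ × ℕ → ℕ)
    (hmC : ∀ j < K, ∀ r c : ℕ, a j ≤ c → c < a (j + 1) →
      mC (r, c) = L * a j + w j * r + rhoW (w j) r (c - a j))
    (j : ℕ) (hj : j < K) (u v : ℕ) :
    (mC '' {p : ℕ × ℕ | u ≤ p.1 ∧ p.1 ≤ v ∧ a j ≤ p.2 ∧ p.2 < a (j + 1)} =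
      Set.Icc (L * a j + w j * u) (L * a j + w j * (v + 1) - 1)) ∧
    (∀ p q : ℕ × ℕ,
      (u ≤ p.1 ∧ p.1 ≤ v ∧ a j ≤ p.2 ∧ p.2 < a (j + 1)) →
      (u ≤ q.1 ∧ q.1 ≤ v ∧ a j ≤ q.2 ∧ q.2 < a (j + 1)) →
      mC q = mC p + 1 →
      |(p.1 : ℤ) - (q.1 : ℤ)| + |(p.2 : ℤ) - (q.2 : ℤ)| = 1) := by
  rw [hstep j hj]
  have hm : ∀ r c, a j ≤ c → c < a j + w j →
      mC (r, c) = L * a j + snake (w j) (r, c - a j) := fun r c hc hc' => by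
    rw [hmC j hj r c hc (hstep j hj ▸ hc'), snake, add_assoc]
  exact ⟨image_block_eq_Icc hm (hw j hj) u v,
    fun p q hp hq => adjacent_of_block_succ hm hp.2.2 hq.2.2⟩

/-- The boustrophedon ordering `m_𝒞` restricts to a Hamiltonian path through every
subgrid `S = {u,…,v} × C_j`: (i) the image `m_𝒞(S)` is the set of consecutive
integers `{L·a_j + w_j·u, …, L·a_j + w_j·(v+1) − 1}`, and (ii) points of `S` with
consecutive ranks are nearest neighbors in the grid. -/
theorem stmt9 (L K : ℕ) (hL : 1 ≤ L) (hK : 1 ≤ K)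
    (a w : ℕ → ℕ) (ha0 : a 0 = 0) (haK : a K = L)
    (hw : ∀ j < K, 1 ≤ w j) (hstep : ∀ j < K, a (j + 1) = a j + w j)
    (mC : ℕ × ℕ → ℕ)
    (hmC : ∀ j < K, ∀ r c : ℕ, a j ≤ c → c < a (j + 1) →
      mC (r, c) = L * a j + w j * r + rhoW (w j) r (c - a j))
    (j : ℕ) (hj : j < K) (u v : ℕ) (huv : u ≤ v) (hv : v ≤ L - 1) :
    (mC '' {p : ℕ × ℕ | u ≤ p.1 ∧ p.1 ≤ v ∧ a j ≤ p.2 ∧ p.2 < a (j + 1)} =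
      Set.Icc (L * a j + w j * u) (L * a j + w j * (v + 1) - 1)) ∧
    (∀ p q : ℕ × ℕ,
      (u ≤ p.1 ∧ p.1 ≤ v ∧ a j ≤ p.2 ∧ p.2 < a (j + 1)) →
      (u ≤ q.1 ∧ q.1 ≤ v ∧ a j ≤ q.2 ∧ q.2 < a (j + 1)) →
      mC q = mC p + 1 →
      |(p.1 : ℤ) - (q.1 : ℤ)| + |(p.2 : ℤ) - (q.2 : ℤ)| = 1) :=
  stmt9_general L K a w hw hstep mC hmC j hj u v
end

section
/- Let L ≥ 1, d ≥ 1 and let σ be a permutation of {1,…,d} (a dimensional hierarchy). The d-dimensional S-pattern ordering m_S^σ is a bijection from the grid {0,…,L−1}^d onto {0,…,L^d−1}. -/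
/-- `ρ_r(c) = c` for even `r` and `L−1−c` for odd `r`. -/
def rho (L r c : ℕ) : ℕ := if r % 2 = 0 then c else L - 1 - c

/-- `s_i(v) = ∑_{k > i} v_{σ(k)}` : the sum of the coordinates higher than `i` in
the dimensional hierarchy `σ`. -/
def sSum (d : ℕ) (σ : Equiv.Perm (Fin d)) (v : Fin d → ℕ) (i : Fin d) : ℕ :=
  ∑ k ∈ Finset.univ.filter (fun k => i < k), v (σ k)

/-- The `d`-dimensional S-pattern ordering
`m_S^σ(v) = ∑_i L^{i} · ρ_{s_i(v)}(v_{σ(i)})` (0-based `i`). -/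
def mSd (L d : ℕ) (σ : Equiv.Perm (Fin d)) (v : Fin d → ℕ) : ℕ :=
  ∑ i : Fin d, L ^ (i : ℕ) * rho L (sSum d σ v i) (v (σ i))

/-! The S-pattern ordering is the base-`L` number whose `i`-th digit is `ρ_{s_i(v)}(v_{σ(i)})`.
Since `s_i(v)` only involves the coordinates `v_{σ(k)}` with `k > i`, and each `ρ_r` is an
involution of `{0,…,L−1}`, the coordinates can be read back from these digits from the top
down; so `v ↦ digits` is injective on the finite grid, hence a bijection of it, and base-`L`
numerals are a bijection of the grid onto `{0,…,L^d−1}`. -/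

lemma rho_lt {L r c : ℕ} (hc : c < L) : rho L r c < L := by
  unfold rho; split <;> omega

lemma rho_injOn (L r : ℕ) : Set.InjOn (rho L r) (Set.Iio L) := by
  intro c hc c' hc' h
  simp only [Set.mem_Iio] at hc hc'
  unfold rho at h; split at h <;> omega

def ofDigitsFin (L d : ℕ) (a : Fin d → ℕ) : ℕ := ∑ i : Fin d, L ^ (i : ℕ) * a i

lemma bijOn_ofDigitsFin (L d : ℕ) :
    Set.BijOn (ofDigitsFin L d) {a | ∀ i, a i < L} {k | k < L ^ d} := by
  have hval (f : Fin d → Fin L) :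
      ofDigitsFin L d (fun i => f i) = finFunctionFinEquiv f := by
    simp only [ofDigitsFin, finFunctionFinEquiv_apply, mul_comm]
  refine ⟨fun a ha => ?_, fun a ha b hb hab => ?_, fun k hk => ?_⟩
  · simpa [hval (fun i => ⟨a i, ha i⟩)] using (finFunctionFinEquiv fun i => ⟨a i, ha i⟩).isLt
  · have h := finFunctionFinEquiv.injective <| Fin.ext <|
      (hval (fun i => ⟨a i, ha i⟩)).symm.trans (hab.trans (hval fun i => ⟨b i, hb i⟩))
    funext i
    exact congrArg Fin.val (congrFun h i)
  · refine ⟨fun i => finFunctionFinEquiv.symm ⟨k, hk⟩ i, fun i => Fin.isLt _, ?_⟩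
    rw [hval, Equiv.apply_symm_apply]

def sDigits (L d : ℕ) (σ : Equiv.Perm (Fin d)) (v : Fin d → ℕ) (i : Fin d) : ℕ :=
  rho L (sSum d σ v i) (v (σ i))

section sDigits

variable (L d : ℕ) (σ : Equiv.Perm (Fin d))

lemma mSd_eq_ofDigitsFin_comp : mSd L d σ = ofDigitsFin L d ∘ sDigits L d σ := rfl

lemma sSum_congr {v w : Fin d → ℕ} {i : Fin d} (h : ∀ k, i < k → v (σ k) = w (σ k)) :
    sSum d σ v i = sSum d σ w i :=
  Finset.sum_congr rfl fun k hk => h k (Finset.mem_filter.mp hk).2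

lemma mapsTo_sDigits :
    Set.MapsTo (sDigits L d σ) {v | ∀ i, v i < L} {v | ∀ i, v i < L} :=
  fun _ hv i => rho_lt (hv (σ i))

lemma injOn_sDigits : Set.InjOn (sDigits L d σ) {v | ∀ i, v i < L} := by
  intro v hv w hw h
  have hσ : ∀ i, v (σ i) = w (σ i) := fun i => by
    induction i using WellFoundedGT.induction with
    | _ i ih =>
      have hdigit := congrFun h i
      rw [sDigits, sDigits, sSum_congr d σ ih] at hdigit
      exact rho_injOn L _ (hv (σ i)) (hw (σ i)) hdigit
  funext x
  simpa using hσ (σ.symm x)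

lemma bijOn_sDigits :
    Set.BijOn (sDigits L d σ) {v | ∀ i, v i < L} {v | ∀ i, v i < L} := by
  have hfin : {v : Fin d → ℕ | ∀ i, v i < L}.Finite := by
    simpa [Set.pi] using Set.Finite.pi (t := fun _ : Fin d => Set.Iio L) fun _ => Set.finite_Iio L
  exact (hfin.injOn_iff_bijOn_of_mapsTo (mapsTo_sDigits L d σ)).mp (injOn_sDigits L d σ)

end sDigits

theorem stmt12_general (L d : ℕ) (σ : Equiv.Perm (Fin d)) :
    Set.BijOn (mSd L d σ) {v : Fin d → ℕ | ∀ i, v i < L} {k : ℕ | k < L ^ d} := by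
  rw [mSd_eq_ofDigitsFin_comp]
  exact (bijOn_ofDigitsFin L d).comp (bijOn_sDigits L d σ)

/-- For any dimensional hierarchy `σ`, the `d`-dimensional S-pattern ordering is a
bijection from the grid `{0,…,L−1}^d` onto `{0,…,L^d−1}`. -/
theorem stmt12 (L d : ℕ) (hL : 1 ≤ L) (hd : 1 ≤ d) (σ : Equiv.Perm (Fin d)) :
    Set.BijOn (mSd L d σ) {v : Fin d → ℕ | ∀ i, v i < L} {k : ℕ | k < L ^ d} :=
  stmt12_general L d σ
end
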